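/- Let L have weights (2,2,p,q), s = Σ x_i and δ = (p−2)x_3+(q−2)x_4, and let ℓ = Σ ℓ_i x_i ∈ [s, s+δ]. Then for all 1 ≤ i ≤ 4, the element −(2c − ℓ + ℓ_i x_i) satisfies −2c + ℓ − ℓ_i x_i ≤ 2c + ω, where ω = c − s. -/
import Mathlib


/-- The subgroup of relations `p i • x_i - c` in the free abelian group on `x_1,…,x_n,c`. -/
def Lrel (n : ℕ) (p : Fin n → ℤ) : AddSubgroup ((Fin n → ℤ) × ℤ) :=
  AddSubgroup.closure {v | ∃ i : Fin n, v = (Pi.single i (p i), -1)}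

/-- The Geigle-Lenzing group `L = ⟨x_1,…,x_n,c⟩ / ⟨p_i x_i - c⟩`. -/
abbrev Lgrp (n : ℕ) (p : Fin n → ℤ) : Type :=
  ((Fin n → ℤ) × ℤ) ⧸ Lrel n p

/-- The generator `x_i` of `L`. -/
def Lx (n : ℕ) (p : Fin n → ℤ) (i : Fin n) : Lgrp n p :=
  QuotientAddGroup.mk (Pi.single i 1, 0)

/-- The canonical element `c` of `L`. -/
def Lc (n : ℕ) (p : Fin n → ℤ) : Lgrp n p :=
  QuotientAddGroup.mk (0, 1)

/-- The positive cone `L_+`, the submonoid generated by `x_1,…,x_n,c`. -/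
def Lplus (n : ℕ) (p : Fin n → ℤ) : AddSubmonoid (Lgrp n p) :=
  AddSubmonoid.closure (Set.range (Lx n p) ∪ {Lc n p})

namespace GLpq

variable (p q : ℤ)

/-- The weight sequence `(2,2,p,q)`. -/
def w : Fin 4 → ℤ := ![2, 2, p, q]

/-- The generator `x_i`. -/
def X (i : Fin 4) : Lgrp 4 (w p q) := Lx 4 (w p q) i

/-- The canonical element `c`. -/
def C : Lgrp 4 (w p q) := Lc 4 (w p q)

/-- The positive cone `L_+`. -/
def pos : AddSubmonoid (Lgrp 4 (w p q)) := Lplus 4 (w p q)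

/-- The element `Σ l_i x_i`. -/
def elt (l : Fin 4 → ℤ) : Lgrp 4 (w p q) := ∑ t, l t • X p q t

/-- `s = x_1 + x_2 + x_3 + x_4`. -/
def s : Lgrp 4 (w p q) := ∑ t, X p q t

/-- The dualizing element `ω = c − s`. -/
def om : Lgrp 4 (w p q) := C p q - s p q

/-- The partial order: `a ≤ b` iff `b − a ∈ L_+`. -/
def le (a b : Lgrp 4 (w p q)) : Prop := b - a ∈ pos p q

/-- The condition for `Σ l_i x_i` to lie in `[s, s+δ]`:
`l_1 = l_2 = 1`, `1 ≤ l_3 ≤ p−1`, `1 ≤ l_4 ≤ q−1`. -/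
def inInterval (l : Fin 4 → ℤ) : Prop :=
  l 0 = 1 ∧ l 1 = 1 ∧ 1 ≤ l 2 ∧ l 2 ≤ p - 1 ∧ 1 ≤ l 3 ∧ l 3 ≤ q - 1

end GLpq


lemma Lrel_spec (n : ℕ) (p : Fin n → ℤ) (i : Fin n) :
    (p i) • Lx n p i = Lc n p := by
  have h1 : (p i) • Lx n p i
      = QuotientAddGroup.mk ((p i) • ((Pi.single i (1:ℤ), (0:ℤ)) : (Fin n → ℤ) × ℤ)) :=
    (QuotientAddGroup.mk_zsmul _ _ _).symm
  rw [h1, Lc, QuotientAddGroup.eq]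
  have h2 : -((p i) • ((Pi.single i (1:ℤ), (0:ℤ)) : (Fin n → ℤ) × ℤ)) + ((0 : Fin n → ℤ), (1:ℤ))
      = -((Pi.single i (p i), -1) : (Fin n → ℤ) × ℤ) := by
    ext j
    · simp [Pi.single_apply]
    · simp
  rw [h2]
  exact neg_mem (AddSubgroup.subset_closure ⟨i, rfl⟩)

namespace GLpq

variable (p q : ℤ)

lemma X_mem_pos (i : Fin 4) : X p q i ∈ pos p q :=
  AddSubmonoid.subset_closure (Or.inl ⟨i, rfl⟩)

lemma C_mem_pos : C p q ∈ pos p q :=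
  AddSubmonoid.subset_closure (Or.inr rfl)

lemma smul_mem_pos {a : Lgrp 4 (w p q)} (ha : a ∈ pos p q) {k : ℤ} (hk : 0 ≤ k) :
    k • a ∈ pos p q := by
  rw [← Int.toNat_of_nonneg hk, natCast_zsmul]
  exact AddSubmonoid.nsmul_mem _ ha _

lemma rel (i : Fin 4) : (w p q i) • X p q i = C p q := Lrel_spec 4 (w p q) i

lemma rel0 : (2 : ℤ) • X p q 0 = C p q := by have := rel p q 0; simpa [w] using this
lemma rel1 : (2 : ℤ) • X p q 1 = C p q := by have := rel p q 1; simpa [w] using this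
lemma rel2 : p • X p q 2 = C p q := by have := rel p q 2; simpa [w] using this
lemma rel3 : q • X p q 3 = C p q := by have := rel p q 3; simpa [w] using this

end GLpq

open GLpq in
/-- For `ℓ ∈ [s, s+δ]` and every `i`, one has `−2c + ℓ − ℓ_i x_i ≤ 2c + ω`. -/
theorem key_ineq (p q : ℤ) (hp : 2 ≤ p) (hq : 2 ≤ q) (l : Fin 4 → ℤ)
    (hl : inInterval p q l) (i : Fin 4) :
    le p q (-((2 : ℤ) • C p q) + elt p q l - l i • X p q i)
      ((2 : ℤ) • C p q + om p q) := by
  obtain ⟨h0, h1, h2a, h2b, h3a, h3b⟩ := hl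
  have r0 := rel0 p q
  have r1 := rel1 p q
  have r2 := rel2 p q
  have r3 := rel3 p q
  unfold le
  fin_cases i
  · have hD : (2 : ℤ) • C p q + om p q
        - (-((2 : ℤ) • C p q) + elt p q l - l 0 • X p q 0)
        = C p q + X p q 0 + (p - 1 - l 2) • X p q 2 + (q - 1 - l 3) • X p q 3 := by
      simp only [elt, om, s, Fin.sum_univ_four, h0, h1, one_smul]
      linear_combination (norm := module) (-1 : ℤ) • r0 + (-1 : ℤ) • r1 + (-1 : ℤ) • r2
        + (-1 : ℤ) • r3
    show (2 : ℤ) • C p q + om p q - (-((2 : ℤ) • C p q) + elt p q l - l 0 • X p q 0) ∈ pos p q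
    rw [hD]
    refine add_mem (add_mem (add_mem (C_mem_pos p q) (X_mem_pos p q 0)) ?_) ?_
    · exact smul_mem_pos p q (X_mem_pos p q 2) (by omega)
    · exact smul_mem_pos p q (X_mem_pos p q 3) (by omega)
  · have hD : (2 : ℤ) • C p q + om p q
        - (-((2 : ℤ) • C p q) + elt p q l - l 1 • X p q 1)
        = C p q + X p q 1 + (p - 1 - l 2) • X p q 2 + (q - 1 - l 3) • X p q 3 := by
      simp only [elt, om, s, Fin.sum_univ_four, h0, h1, one_smul]
      linear_combination (norm := module) (-1 : ℤ) • r0 + (-1 : ℤ) • r1 + (-1 : ℤ) • r2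
        + (-1 : ℤ) • r3
    show (2 : ℤ) • C p q + om p q - (-((2 : ℤ) • C p q) + elt p q l - l 1 • X p q 1) ∈ pos p q
    rw [hD]
    refine add_mem (add_mem (add_mem (C_mem_pos p q) (X_mem_pos p q 1)) ?_) ?_
    · exact smul_mem_pos p q (X_mem_pos p q 2) (by omega)
    · exact smul_mem_pos p q (X_mem_pos p q 3) (by omega)
  · have hD : (2 : ℤ) • C p q + om p q
        - (-((2 : ℤ) • C p q) + elt p q l - l 2 • X p q 2)
        = C p q + (p - 1) • X p q 2 + (q - 1 - l 3) • X p q 3 := by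
      simp only [elt, om, s, Fin.sum_univ_four, h0, h1, one_smul]
      linear_combination (norm := module) (-1 : ℤ) • r0 + (-1 : ℤ) • r1 + (-1 : ℤ) • r2
        + (-1 : ℤ) • r3
    show (2 : ℤ) • C p q + om p q - (-((2 : ℤ) • C p q) + elt p q l - l 2 • X p q 2) ∈ pos p q
    rw [hD]
    refine add_mem (add_mem (C_mem_pos p q) ?_) ?_
    · exact smul_mem_pos p q (X_mem_pos p q 2) (by omega)
    · exact smul_mem_pos p q (X_mem_pos p q 3) (by omega)
  · have hD : (2 : ℤ) • C p q + om p q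
        - (-((2 : ℤ) • C p q) + elt p q l - l 3 • X p q 3)
        = C p q + (p - 1 - l 2) • X p q 2 + (q - 1) • X p q 3 := by
      simp only [elt, om, s, Fin.sum_univ_four, h0, h1, one_smul]
      linear_combination (norm := module) (-1 : ℤ) • r0 + (-1 : ℤ) • r1 + (-1 : ℤ) • r2
        + (-1 : ℤ) • r3
    show (2 : ℤ) • C p q + om p q - (-((2 : ℤ) • C p q) + elt p q l - l 3 • X p q 3) ∈ pos p q
    rw [hD]
    refine add_mem (add_mem (C_mem_pos p q) ?_) ?_
    · exact smul_mem_pos p q (X_mem_pos p q 2) (by omega)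
    · exact smul_mem_pos p q (X_mem_pos p q 3) (by omega)
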